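/- arXiv:1403.1909 — 10 statements merged into one kernel-verified Lean document; each statement's English description precedes it below -/
import Mathlib

section
/- Every Haar meager subset of an abelian Polish group is meager. -/
/-!
Put `E = {(x, k) | f k - x ∈ B} ⊆ X × K`, a Borel set. Its section at `x` is `f ⁻¹' (B + x)`,
meager by assumption, and its section at `k` is the translate `f k - B`. By the Kuratowski–Ulam
theorem (for a second countable factor), meagerness of all `x`-sections makes `E` meager, and
then residually many `k`-sections are meager; as `K` is a nonempty Baire space one of them is,
and `B` is the image of `f k - B` under the homeomorphism `y ↦ f k - y`.
-/

open Set Filter Topology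

/-- `A` is *Haar meager* in an abelian (Polish) group `X` if there are a Borel set
`B ⊇ A`, a (nonempty) compact metric space `K` and a continuous `f : K → X` such that
`f ⁻¹ (B + x)` is meager in `K` for every `x ∈ X`.  Here `B + x = {y | y - x ∈ B}`. -/
def IsHaarMeager {X : Type*} [AddCommGroup X] [TopologicalSpace X]
    [MeasurableSpace X] (A : Set X) : Prop :=
  ∃ B : Set X, A ⊆ B ∧ MeasurableSet B ∧
    ∃ (K : Type) (_ : MetricSpace K) (_ : CompactSpace K) (_ : Nonempty K)
      (f : K → X), Continuous f ∧ ∀ x : X, IsMeagre (f ⁻¹' {y | y - x ∈ B})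

section KuratowskiUlam

variable {Y Z : Type*} [TopologicalSpace Y] [TopologicalSpace Z]

theorem IsOpen.eventually_residual_dense_preimage_prodMk [SecondCountableTopology Z]
    {W : Set (Y × Z)} (hWo : IsOpen W) (hWd : Dense W) : ∀ᵇ y, Dense (Prod.mk y ⁻¹' W) := by
  obtain ⟨b, hbc, hbne, hb⟩ := TopologicalSpace.exists_countable_basis Z
  have hmeets : ∀ V ∈ b, ∀ᵇ y, (V ∩ Prod.mk y ⁻¹' W).Nonempty := by
    intro V hV
    have hVo : IsOpen V := hb.isOpen hV
    have hVne : V.Nonempty := nonempty_iff_ne_empty.2 (ne_of_mem_of_not_mem hV hbne)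
    have hproj : IsOpen (Prod.fst '' (W ∩ univ ×ˢ V)) :=
      isOpenMap_fst _ (hWo.inter (isOpen_univ.prod hVo))
    have hdense : Dense (Prod.fst '' (W ∩ univ ×ˢ V)) := by
      refine dense_iff_inter_open.2 fun O hOo hOne => ?_
      obtain ⟨p, ⟨hpO, hpV⟩, hpW⟩ :=
        hWd.inter_open_nonempty (O ×ˢ V) (hOo.prod hVo) (hOne.prod hVne)
      exact ⟨p.1, hpO, p, ⟨hpW, trivial, hpV⟩, rfl⟩
    filter_upwards [residual_of_dense_open hproj hdense]
    rintro y ⟨⟨y, z⟩, ⟨hzW, -, hzV⟩, rfl⟩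
    exact ⟨z, hzV, hzW⟩
  filter_upwards [(eventually_countable_ball hbc).2 hmeets] with y hy
  exact hb.dense_iff.2 fun V hV _ => hy V hV

theorem IsMeagre.eventually_residual_isMeagre_preimage_prodMk [SecondCountableTopology Z]
    {E : Set (Y × Z)} (hE : IsMeagre E) : ∀ᵇ y, IsMeagre (Prod.mk y ⁻¹' E) := by
  obtain ⟨S, hSo, hSd, hSc, hSE⟩ := mem_residual_iff.1 hE
  filter_upwards [(eventually_countable_ball hSc).2 fun W hW =>
    (hSo W hW).eventually_residual_dense_preimage_prodMk (hSd W hW)] with y hy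
  refine mem_of_superset ((countable_bInter_mem hSc).2 fun W hW =>
    residual_of_dense_open ((hSo W hW).preimage (by fun_prop)) (hy W hW)) ?_
  rw [← preimage_iInter₂, ← sInter_eq_biInter, ← preimage_compl]
  exact preimage_mono hSE

theorem BaireMeasurableSet.isMeagre_of_forall_isMeagre_preimage_prodMk [BaireSpace Y]
    [BaireSpace Z] [SecondCountableTopology Z] {E : Set (Y × Z)} (hE : BaireMeasurableSet E)
    (hsec : ∀ y, IsMeagre (Prod.mk y ⁻¹' E)) : IsMeagre E := by
  obtain ⟨U, hUo, hEU⟩ := hE.residualEq_isOpen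
  suffices U = ∅ from eventuallyEq_empty.1 (this ▸ hEU)
  refine eq_empty_iff_forall_notMem.2 fun ⟨y₀, z₀⟩ hp₀ => ?_
  obtain ⟨O, V, hOo, hVo, hy₀, hz₀, hOV⟩ := isOpen_prod_iff.1 hUo y₀ z₀ hp₀
  -- `E` is comeager in the box `O ×ˢ V`, so some section over `O` would make `V` meager.
  have hdiff : IsMeagre (O ×ˢ V \ E) := by
    filter_upwards [eventuallyEq_set.1 hEU] with p hp hpd
    exact hpd.2 (hp.2 (hOV hpd.1))
  obtain ⟨y, hyO, hy⟩ := (dense_of_mem_residual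
    hdiff.eventually_residual_isMeagre_preimage_prodMk).inter_open_nonempty O hOo ⟨y₀, hy₀⟩
  refine not_isMeagre_of_isOpen hVo ⟨z₀, hz₀⟩ ((hy.union (hsec y)).mono fun z hz => ?_)
  by_cases hzE : (y, z) ∈ E
  · exact Or.inr hzE
  · exact Or.inl ⟨⟨hyO, hz⟩, hzE⟩

end KuratowskiUlam

/-- Every Haar meager subset of an abelian Polish group is meager. -/
theorem isMeagre_of_isHaarMeager {X : Type*} [AddCommGroup X] [TopologicalSpace X]
    [IsTopologicalAddGroup X] [PolishSpace X] [MeasurableSpace X] [BorelSpace X]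
    (A : Set X) (hA : IsHaarMeager A) : IsMeagre A := by
  obtain ⟨B, hAB, hB, K, _, _, _, f, hf, hsec⟩ := hA
  borelize K
  have hE : IsMeagre ((fun p : X × K => f p.2 - p.1) ⁻¹' B) :=
    (hB.preimage (by fun_prop : Continuous fun p : X × K => f p.2 - p.1).measurable
      ).baireMeasurableSet.isMeagre_of_forall_isMeagre_preimage_prodMk hsec
  obtain ⟨k, hk⟩ : ∃ k, IsMeagre {x : X | f k - x ∈ B} :=
    (dense_of_mem_residual (hE.preimage_of_isOpenMap continuous_swap
      (Homeomorph.prodComm K X).isOpenMap).eventually_residual_isMeagre_preimage_prodMk).nonempty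
  refine (hk.preimage_of_isOpenMap (Homeomorph.subLeft (f k)).continuous
    (Homeomorph.subLeft (f k)).isOpenMap).mono fun x hx => ?_
  simpa using hAB hx
end

section
/- If X is a locally compact abelian Polish group and A ⊆ X is meager and Borel, then A is Haar meager. -/
/-!
Let `U` be an open neighbourhood of `0` with compact closure, and take for `f` the inclusion of
`closure U` into `X`. As `U` is open and dense in `closure U`, this inclusion pulls dense open sets
back to dense open sets, hence meagre sets back to meagre sets; every translate of `A` is meagre,
so `B := A` works. The only other point is to replace `closure U` by a homeomorphic metric space
in `Type`, which is possible because it embeds into `ℓ^∞`.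
-/

open Set

open Filter Topology TopologicalSpace

theorem Dense.preimage_val_closure {X : Type*} [TopologicalSpace X] {U t : Set X}
    (hU : IsOpen U) (ht : Dense t) : Dense ((Subtype.val : closure U → X) ⁻¹' t) := by
  rw [Subtype.dense_iff, Subtype.image_preimage_coe]
  calc closure U ⊆ closure (U ∩ t) :=
        closure_minimal (ht.open_subset_closure_inter hU) isClosed_closure
    _ ⊆ closure (closure U ∩ t) := closure_mono (inter_subset_inter_left _ subset_closure)

theorem tendsto_val_closure_residual {X : Type*} [TopologicalSpace X] {U : Set X}
    (hU : IsOpen U) :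
    Tendsto (Subtype.val : closure U → X) (residual (closure U)) (residual X) := by
  refine le_countableGenerate_iff_of_countableInterFilter.mpr ?_
  rintro t ⟨ht, htd⟩
  exact residual_of_dense_open (ht.preimage continuous_subtype_val) (htd.preimage_val_closure hU)

theorem exists_metricSpace_homeomorph (Y : Type*) [TopologicalSpace Y] [T3Space Y]
    [SecondCountableTopology Y] : ∃ (K : Type) (_ : MetricSpace K), Nonempty (K ≃ₜ Y) := by
  obtain ⟨e, he⟩ := exists_embedding_l_infty Y
  have : Small.{0} Y := small_of_injective he.injective
  have : MetrizableSpace (Shrink.{0} Y) := (Shrink.homeomorph Y).symm.isEmbedding.metrizableSpace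
  exact ⟨Shrink Y, metrizableSpaceMetric _, ⟨(Shrink.homeomorph Y).symm⟩⟩

theorem isHaarMeager_of_isMeagre_general {X : Type*} [AddCommGroup X] [TopologicalSpace X]
    [IsTopologicalAddGroup X] [PolishSpace X] [LocallyCompactSpace X]
    [MeasurableSpace X]
    (A : Set X) (hmeager : IsMeagre A) (hBorel : MeasurableSet A) :
    IsHaarMeager A := by
  obtain ⟨U, hU, h0U, hUc⟩ := exists_isOpen_mem_isCompact_closure (0 : X)
  have : CompactSpace (closure U) := isCompact_iff_compactSpace.mp hUc
  obtain ⟨K, _, ⟨h⟩⟩ := exists_metricSpace_homeomorph (closure U)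
  refine ⟨A, subset_rfl, hBorel, K, _, h.symm.compactSpace, ⟨h.symm ⟨0, subset_closure h0U⟩⟩,
    Subtype.val ∘ h, by fun_prop, fun x => ?_⟩
  have htrans : IsMeagre {y | y - x ∈ A} :=
    hmeager.preimage_of_isOpenMap (Homeomorph.subRight x).continuous
      (Homeomorph.subRight x).isOpenMap
  have hval : IsMeagre ((↑) ⁻¹' {y | y - x ∈ A} : Set (closure U)) :=
    tendsto_val_closure_residual hU htrans
  exact hval.preimage_of_isOpenMap h.continuous h.isOpenMap

/-- In a locally compact abelian Polish group, every meager Borel set is Haar meager. -/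
theorem isHaarMeager_of_isMeagre {X : Type*} [AddCommGroup X] [TopologicalSpace X]
    [IsTopologicalAddGroup X] [PolishSpace X] [LocallyCompactSpace X]
    [MeasurableSpace X] [BorelSpace X]
    (A : Set X) (hmeager : IsMeagre A) (hBorel : MeasurableSet A) :
    IsHaarMeager A :=
  isHaarMeager_of_isMeagre_general A hmeager hBorel
end

section
/- In a locally compact abelian Polish group, a Borel set is Haar meager if and only if it is meager. -/
open Set

/-!
If every `f ⁻¹' (B + x)` is meagre, the set `E = {(x, k) | f k - x ∈ B} ⊆ X × K` is Baire
measurable with meagre vertical sections, hence meagre by the Kuratowski–Ulam theorem; so for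
residually many `k` its horizontal section `f k - B` is meagre, and `B` is meagre.
Conversely, a meagre set lies in a meagre Borel set, all of whose translates are meagre; for `K`
take the closure of an open set with compact closure: since `K` is the closure of its interior,
meagre subsets of `X` meet `K` in meagre subsets of `K`.
-/

open Filter Topology TopologicalSpace

section KuratowskiUlam

variable {α β : Type*} [TopologicalSpace α] [TopologicalSpace β] [SecondCountableTopology β]

theorem IsOpen.eventually_residual_dense_slice {W : Set (α × β)} (hWo : IsOpen W)
    (hWd : Dense W) : ∀ᶠ x in residual α, Dense (Prod.mk x ⁻¹' W) := by
  obtain ⟨b, hbc, hbne, hb⟩ := exists_countable_basis β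
  have hmeets : ∀ v ∈ b, {x | (v ∩ Prod.mk x ⁻¹' W).Nonempty} ∈ residual α := by
    intro v hv
    have hvne : v.Nonempty := nonempty_iff_ne_empty.2 fun h => hbne (h ▸ hv)
    refine residual_of_dense_open (isOpen_iff_mem_nhds.2 fun x ⟨y, hyv, hyW⟩ => ?_) ?_
    · exact mem_of_superset ((Continuous.prodMk_left y).continuousAt.preimage_mem_nhds
        (hWo.mem_nhds hyW)) fun x' hx' => ⟨y, hyv, hx'⟩
    · refine dense_iff_inter_open.2 fun U hU hUne => ?_
      obtain ⟨⟨x, y⟩, ⟨hxU, hyv⟩, hxyW⟩ :=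
        hWd.inter_open_nonempty _ (hU.prod (hb.isOpen hv)) (hUne.prod hvne)
      exact ⟨x, hxU, y, hyv, hxyW⟩
  filter_upwards [(countable_bInter_mem hbc).2 hmeets] with x hx
  exact hb.dense_iff.2 fun v hv _ => mem_iInter₂.1 hx v hv

theorem Filter.Eventually.curry_residual {p : α × β → Prop}
    (h : ∀ᶠ z in residual (α × β), p z) :
    ∀ᶠ x in residual α, ∀ᶠ y in residual β, p (x, y) := by
  obtain ⟨S, hSo, hSd, hSc, hSp⟩ := mem_residual_iff.1 h
  filter_upwards [(countable_bInter_mem hSc).2 fun t ht =>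
    (hSo t ht).eventually_residual_dense_slice (hSd t ht)] with x hx
  refine mem_of_superset ((countable_bInter_mem hSc).2 fun t ht => residual_of_dense_open
    ((hSo t ht).preimage (Continuous.prodMk_right x)) (mem_iInter₂.1 hx t ht)) fun y hy => ?_
  exact hSp (mem_sInter.2 fun t ht => mem_iInter₂.1 hy t ht)

theorem BaireMeasurableSet.isMeagre_of_forall_isMeagre_slice [BaireSpace β] {E : Set (α × β)}
    (hE : BaireMeasurableSet E) (h : ∀ x, IsMeagre (Prod.mk x ⁻¹' E)) : IsMeagre E := by
  obtain ⟨u, hu, hEu⟩ := hE.residualEq_isOpen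
  have hslice : ∀ᶠ x in residual α, Prod.mk x ⁻¹' u = ∅ := by
    filter_upwards [Filter.Eventually.curry_residual hEu] with x hx
    have hmeagre : IsMeagre (Prod.mk x ⁻¹' u) := by
      filter_upwards [h x, hx] with y hyE hy
      exact fun hyu => hyE (hy.mpr hyu)
    by_contra hne
    exact not_isMeagre_of_isOpen (hu.preimage (Continuous.prodMk_right x))
      (nonempty_iff_ne_empty.2 hne) hmeagre
  have hu : IsMeagre u := by
    have hbad : IsMeagre {x : α | Prod.mk x ⁻¹' u = ∅}ᶜ := by rwa [IsMeagre, compl_compl]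
    have hfst : IsMeagre ((Prod.fst : α × β → α) ⁻¹' {x | Prod.mk x ⁻¹' u = ∅}ᶜ) :=
      hbad.preimage_of_isOpenMap continuous_fst isOpenMap_fst
    refine hfst.mono ?_
    intro z hz hzx
    exact eq_empty_iff_forall_notMem.1 hzx z.2 hz
  filter_upwards [hu, hEu] with z hzu hz
  exact fun hzE => hzu (hz.mp hzE)

end KuratowskiUlam

theorem IsHaarMeager.isMeagre {X : Type*} [AddCommGroup X] [TopologicalSpace X]
    [IsTopologicalAddGroup X] [SecondCountableTopology X] [MeasurableSpace X] [BorelSpace X]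
    {A : Set X} (hA : IsHaarMeager A) : IsMeagre A := by
  obtain ⟨B, hAB, hB, K, _, _, _, f, hf, hfB⟩ := hA
  have hE : IsMeagre ((fun p : X × K => f p.2 - p.1) ⁻¹' B) := by
    refine BaireMeasurableSet.isMeagre_of_forall_isMeagre_slice ?_ hfB
    borelize (X × K)
    exact (((hf.comp continuous_snd).sub continuous_fst).measurable hB).baireMeasurableSet
  have hswap := hE.preimage_of_isOpenMap continuous_swap (Homeomorph.prodComm K X).isOpenMap
  obtain ⟨k, hk⟩ := (dense_of_mem_residual (Filter.Eventually.curry_residual hswap)).nonempty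
  have hB : IsMeagre ((f k - ·) ⁻¹' {x | f k - x ∈ B}) :=
    IsMeagre.preimage_of_isOpenMap (Homeomorph.subLeft (f k)).continuous
      (Homeomorph.subLeft (f k)).isOpenMap hk
  simp only [preimage_ofPred_eq, sub_sub_cancel, ofPred_mem_eq] at hB
  exact hB.mono hAB

theorem IsMeagre.exists_measurableSet_superset {X : Type*} [TopologicalSpace X]
    [MeasurableSpace X] [OpensMeasurableSpace X] {s : Set X} (hs : IsMeagre s) :
    ∃ t, s ⊆ t ∧ MeasurableSet t ∧ IsMeagre t := by
  obtain ⟨S, hSo, hSd, hSc, hS⟩ := mem_residual_iff.1 hs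
  refine ⟨(⋂₀ S)ᶜ, subset_compl_comm.1 hS,
    (MeasurableSet.sInter hSc fun t ht => (hSo t ht).measurableSet).compl, ?_⟩
  rw [IsMeagre, compl_compl]
  exact (countable_sInter_mem hSc).2 fun t ht => residual_of_dense_open (hSo t ht) (hSd t ht)

theorem tendsto_residual_subtype_val {X : Type*} [TopologicalSpace X] {Y : Set X}
    (hY : Y ⊆ closure (interior Y)) : Tendsto ((↑) : Y → X) (residual Y) (residual X) := by
  refine le_countableGenerate_iff_of_countableInterFilter.2 ?_
  rintro D ⟨hDo, hDd⟩
  refine residual_of_dense_open (hDo.preimage continuous_subtype_val) (Subtype.dense_iff.2 ?_)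
  rw [image_preimage_eq_inter_range, Subtype.range_coe]
  calc Y ⊆ closure (interior Y) := hY
    _ ⊆ closure (closure (interior Y ∩ D)) :=
      closure_mono (hDd.open_subset_closure_inter isOpen_interior)
    _ ⊆ closure (D ∩ Y) := by
      rw [closure_closure, inter_comm]
      exact closure_mono (inter_subset_inter_right D interior_subset)

theorem exists_compactSpace_tendsto_residual (X : Type*) [TopologicalSpace X]
    [LocallyCompactSpace X] [MetrizableSpace X] [Nonempty X] :
    ∃ (K : Type) (_ : MetricSpace K) (_ : CompactSpace K) (_ : Nonempty K) (f : K → X),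
      Continuous f ∧ Tendsto f (residual K) (residual X) := by
  let := metrizableSpaceMetric X
  obtain ⟨x⟩ := ‹Nonempty X›
  obtain ⟨C, hC, hCx⟩ := exists_compact_mem_nhds x
  set Y := closure (interior C)
  have hY : Y ⊆ closure (interior Y) :=
    closure_mono (interior_maximal subset_closure isOpen_interior)
  have := isCompact_iff_compactSpace.1 (hC.closure_of_subset interior_subset)
  -- an isometric copy of `Y` in `Type`, the universe of the witnesses of `IsHaarMeager`
  let e := (kuratowskiEmbedding.isometry Y).isometryEquivOnRange
  have : CompactSpace (range (kuratowskiEmbedding Y)) := e.toHomeomorph.compactSpace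
  refine ⟨range (kuratowskiEmbedding Y), inferInstance, inferInstance,
    ⟨e ⟨x, subset_closure (mem_interior_iff_mem_nhds.2 hCx)⟩⟩, (↑) ∘ e.symm,
    continuous_subtype_val.comp e.symm.continuous, ?_⟩
  exact (tendsto_residual_subtype_val hY).comp
    (tendsto_residual_of_isOpenMap e.symm.continuous e.symm.toHomeomorph.isOpenMap)

theorem IsMeagre.isHaarMeager {X : Type*} [AddCommGroup X] [TopologicalSpace X]
    [IsTopologicalAddGroup X] [LocallyCompactSpace X] [MetrizableSpace X] [MeasurableSpace X]
    [OpensMeasurableSpace X] {A : Set X} (hA : IsMeagre A) : IsHaarMeager A := by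
  obtain ⟨B, hAB, hB, hBm⟩ := hA.exists_measurableSet_superset
  obtain ⟨K, _, _, _, f, hf, hfres⟩ := exists_compactSpace_tendsto_residual X
  refine ⟨B, hAB, hB, K, inferInstance, inferInstance, inferInstance, f, hf, fun x => ?_⟩
  exact hfres <| hBm.preimage_of_isOpenMap (Homeomorph.subRight x).continuous
    (Homeomorph.subRight x).isOpenMap

theorem isHaarMeager_iff_isMeagre_general {X : Type*} [AddCommGroup X] [TopologicalSpace X]
    [IsTopologicalAddGroup X] [PolishSpace X] [LocallyCompactSpace X]
    [MeasurableSpace X] [BorelSpace X]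
    (A : Set X) :
    IsHaarMeager A ↔ IsMeagre A :=
  ⟨IsHaarMeager.isMeagre, IsMeagre.isHaarMeager⟩

/-- In a locally compact abelian Polish group, a Borel set is Haar meager iff it is meager. -/
theorem isHaarMeager_iff_isMeagre {X : Type*} [AddCommGroup X] [TopologicalSpace X]
    [IsTopologicalAddGroup X] [PolishSpace X] [LocallyCompactSpace X]
    [MeasurableSpace X] [BorelSpace X]
    (A : Set X) (hBorel : MeasurableSet A) :
    IsHaarMeager A ↔ IsMeagre A :=
  isHaarMeager_iff_isMeagre_general A
end

section
/- Let X be an abelian Polish group and A ⊆ X a Haar meager set. For every ε > 0 there exists a witness function for A whose range is contained in the open ball of radius ε centered at the identity. -/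
/-!
Translate a witness `f` so that it takes the value `0` at some point `k₀`, which keeps it a
witness because the defining family of sets is translation invariant; then restrict it to
the closure of a small ball around `k₀`. That closure is compact, its image lies near `0`,
and meagre sets of `K` stay meagre in it because it is the closure of an open set.
-/

open Set

section Subspace

variable {K : Type*} [TopologicalSpace K] {s : Set K}

theorem Dense.preimage_val_of_subset_closure_interior (hs : s ⊆ closure (interior s))
    {U : Set K} (hU : Dense U) : Dense ((Subtype.val : s → K) ⁻¹' U) := by
  rw [dense_iff_inter_open]
  rintro W hW ⟨⟨c, hcs⟩, hcW⟩
  obtain ⟨O, hO, rfl⟩ := isOpen_induced_iff.mp hW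
  have hO_int : (O ∩ interior s).Nonempty := mem_closure_iff.mp (hs hcs) O hO hcW
  obtain ⟨z, ⟨hzO, hz_int⟩, hzU⟩ := hU.inter_open_nonempty _ (hO.inter isOpen_interior) hO_int
  exact ⟨⟨z, interior_subset hz_int⟩, hzO, hzU⟩

theorem IsMeagre.preimage_val_of_subset_closure_interior (hs : s ⊆ closure (interior s))
    {M : Set K} (hM : IsMeagre M) : IsMeagre ((Subtype.val : s → K) ⁻¹' M) := by
  rw [IsMeagre, mem_residual_iff] at hM ⊢
  obtain ⟨S, hS_open, hS_dense, hS_count, hS_sub⟩ := hM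
  refine ⟨(Subtype.val ⁻¹' ·) '' S, ?_, ?_, hS_count.image _, ?_⟩
  · rintro _ ⟨U, hU, rfl⟩
    exact (hS_open U hU).preimage continuous_subtype_val
  · rintro _ ⟨U, hU, rfl⟩
    exact (hS_dense U hU).preimage_val_of_subset_closure_interior hs
  · rw [sInter_image, ← preimage_compl]
    exact fun k hk => hS_sub (mem_sInter.mpr fun U hU => mem_iInter₂.mp hk U hU)

theorem subset_closure_interior_closure_of_isOpen {V : Set K} (hV : IsOpen V) :
    closure V ⊆ closure (interior (closure V)) :=
  closure_mono (interior_maximal subset_closure hV)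

end Subspace

section Witness

variable {K X : Type*} [TopologicalSpace K] [AddCommGroup X]

/-- `f ⁻¹' (B + x)` is meagre for every translate `B + x` of `B`. -/
def IsHaarMeagreWitness (B : Set X) (f : K → X) : Prop :=
  ∀ x : X, IsMeagre (f ⁻¹' {y | y - x ∈ B})

theorem IsHaarMeagreWitness.sub_const {B : Set X} {f : K → X} (hf : IsHaarMeagreWitness B f)
    (c : X) : IsHaarMeagreWitness B (fun k => f k - c) := by
  intro x
  simpa only [preimage_ofPred_eq, sub_sub, add_comm c] using hf (x + c)

theorem IsHaarMeagreWitness.comp_val {B : Set X} {f : K → X} (hf : IsHaarMeagreWitness B f)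
    {s : Set K} (hs : s ⊆ closure (interior s)) : IsHaarMeagreWitness B (f ∘ ((↑) : s → K)) :=
  fun x => (hf x).preimage_val_of_subset_closure_interior hs

end Witness

theorem exists_witness_range_small_general {X : Type*} [MetricSpace X] [AddCommGroup X]
    [IsTopologicalAddGroup X] [MeasurableSpace X] (A : Set X)
    (hA : ∃ B : Set X, A ⊆ B ∧ MeasurableSet B ∧
      ∃ (K : Type) (_ : MetricSpace K) (_ : CompactSpace K) (_ : Nonempty K)
        (f : K → X), Continuous f ∧ ∀ x : X, IsMeagre (f ⁻¹' {y | y - x ∈ B}))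
    (ε : ℝ) (hε : 0 < ε) :
    ∃ B : Set X, A ⊆ B ∧ MeasurableSet B ∧
      ∃ (K : Type) (_ : MetricSpace K) (_ : CompactSpace K) (_ : Nonempty K)
        (f : K → X), Continuous f ∧ (∀ x : X, IsMeagre (f ⁻¹' {y | y - x ∈ B})) ∧
          Set.range f ⊆ Metric.ball (0 : X) ε := by
  obtain ⟨B, hAB, hB, K, _, _, ⟨k₀⟩, f, hf, hf_witness⟩ := hA
  set g : K → X := fun k => f k - f k₀
  have hg : Continuous g := hf.sub continuous_const
  have hg_near : g ⁻¹' Metric.ball 0 ε ∈ nhds k₀ := by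
    refine hg.continuousAt.preimage_mem_nhds ?_
    rw [show g k₀ = 0 from sub_self _]
    exact Metric.ball_mem_nhds _ hε
  obtain ⟨δ, hδ, hδ_sub⟩ := Metric.nhds_basis_closedBall.mem_iff.mp hg_near
  set C := closure (Metric.ball k₀ δ)
  have hC_compact : CompactSpace C := isCompact_iff_compactSpace.mp isClosed_closure.isCompact
  refine ⟨B, hAB, hB, C, inferInstance, hC_compact,
    ⟨⟨k₀, subset_closure (Metric.mem_ball_self hδ)⟩⟩, g ∘ Subtype.val,
    hg.comp continuous_subtype_val, ?_, ?_⟩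
  · exact (IsHaarMeagreWitness.sub_const hf_witness (f k₀)).comp_val
      (subset_closure_interior_closure_of_isOpen Metric.isOpen_ball)
  · rintro _ ⟨c, rfl⟩
    exact hδ_sub (Metric.closure_ball_subset_closedBall c.2)

/-- Small-range witness: if `A` is Haar meager in an abelian Polish group `X` (with a
fixed compatible complete metric), then for every `ε > 0` there is a witness function
whose range lies in the open ball of radius `ε` about `0`. -/
theorem exists_witness_range_small {X : Type*} [MetricSpace X] [AddCommGroup X]
    [IsTopologicalAddGroup X] [CompleteSpace X] [SecondCountableTopology X]
    [MeasurableSpace X] [BorelSpace X] (A : Set X)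
    (hA : ∃ B : Set X, A ⊆ B ∧ MeasurableSet B ∧
      ∃ (K : Type) (_ : MetricSpace K) (_ : CompactSpace K) (_ : Nonempty K)
        (f : K → X), Continuous f ∧ ∀ x : X, IsMeagre (f ⁻¹' {y | y - x ∈ B}))
    (ε : ℝ) (hε : 0 < ε) :
    ∃ B : Set X, A ⊆ B ∧ MeasurableSet B ∧
      ∃ (K : Type) (_ : MetricSpace K) (_ : CompactSpace K) (_ : Nonempty K)
        (f : K → X), Continuous f ∧ (∀ x : X, IsMeagre (f ⁻¹' {y | y - x ∈ B})) ∧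
          Set.range f ⊆ Metric.ball (0 : X) ε :=
  exists_witness_range_small_general A hA ε hε
end

section
/- Let K be a Cantor space and M any nonempty compact metric space. Then there is a continuous surjection f : K → M such that for every meager set A ⊆ M, the preimage f⁻¹(A) is meager in K. -/
/-!
Choose locally constant maps `s n : (ℕ → Bool) → M` whose ranges are `2⁻ⁿ`-dense, and read a
point `x` of `ℕ → (ℕ → Bool)` greedily: the `n`-th approximation is replaced by
`s (n + 1) (x (n + 1))` only if this point lies within `2 / 2ⁿ` of it. The approximations are
then Cauchy for every `x`, so they converge to a continuous limit map; and once the first `n + 1`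
digits are fixed, the later digits can still steer the limit to any point of the ball of radius
`2⁻ⁿ` around the `n`-th approximation. So the image of every nonempty open set has nonempty
interior, which forces preimages of dense sets to be dense, and hence preimages of meagre sets
to be meagre.
-/

open Filter Metric PiNat Set Topology

section Residual

variable {X Y : Type*} [TopologicalSpace X] [TopologicalSpace Y] {f : X → Y}

theorem Dense.preimage_of_interior_image_nonempty
    (hf : ∀ V : Set X, IsOpen V → V.Nonempty → (interior (f '' V)).Nonempty)
    {U : Set Y} (hU : Dense U) : Dense (f ⁻¹' U) := by
  refine dense_iff_inter_open.2 fun V hV hVne => ?_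
  obtain ⟨_, hm, hmU⟩ := hU.inter_open_nonempty _ isOpen_interior (hf V hV hVne)
  obtain ⟨x, hxV, rfl⟩ := interior_subset hm
  exact ⟨x, hxV, hmU⟩

theorem tendsto_residual_of_interior_image_nonempty (hc : Continuous f)
    (hf : ∀ V : Set X, IsOpen V → V.Nonempty → (interior (f '' V)).Nonempty) :
    Tendsto f (residual X) (residual Y) := by
  refine le_countableGenerate_iff_of_countableInterFilter.mpr ?_
  rintro U ⟨hUo, hUd⟩
  exact residual_of_dense_open (hUo.preimage hc) (hUd.preimage_of_interior_image_nonempty hf)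

end Residual

theorem tendsto_const_div_two_pow (C : ℝ) : Tendsto (fun n : ℕ => C / 2 ^ n) atTop (𝓝 0) :=
  tendsto_const_nhds.div_atTop (tendsto_pow_atTop_atTop_of_one_lt one_lt_two)

theorem exists_cylinder_subset_of_mem_nhds {D : Type*} [TopologicalSpace D] {x : ℕ → D}
    {V : Set (ℕ → D)} (hV : V ∈ 𝓝 x) : ∃ n, cylinder x n ⊆ V := by
  rw [nhds_pi, Filter.mem_pi'] at hV
  obtain ⟨I, t, ht, hIt⟩ := hV
  obtain ⟨n, hIn⟩ := Finset.exists_nat_subset_range I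
  refine ⟨n, fun z hz => hIt fun i hi => ?_⟩
  rw [mem_cylinder_iff.1 hz i (Finset.mem_range.1 (hIn hi))]
  exact mem_of_mem_nhds (ht i)

theorem exists_isLocallyConstant_forall_exists_dist_lt {M : Type*} [MetricSpace M]
    [CompactSpace M] [Nonempty M] {ε : ℝ} (hε : 0 < ε) :
    ∃ s : (ℕ → Bool) → M, IsLocallyConstant s ∧ ∀ m, ∃ y, dist m (s y) < ε := by
  obtain ⟨t, -, htf, hcover⟩ := finite_cover_balls_of_compact (isCompact_univ (X := M)) hε
  have hball : ∀ m, ∃ c ∈ t, dist m c < ε := fun m => by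
    simpa using hcover (mem_univ m)
  have : Finite t := htf.to_subtype
  have : Nonempty t := let ⟨c, hc, _⟩ := hball (Classical.arbitrary M); ⟨⟨c, hc⟩⟩
  obtain ⟨g, hg, hgs⟩ := exists_nat_bool_continuous_surjective_of_compact ↥t
  refine ⟨(↑) ∘ g, ((IsLocallyConstant.iff_continuous g).2 hg).comp _, fun m => ?_⟩
  obtain ⟨c, hc, hmc⟩ := hball m
  obtain ⟨y, hy⟩ := hgs ⟨c, hc⟩
  exact ⟨y, by simpa [hy] using hmc⟩

section NetLimit

variable {D M : Type*} [MetricSpace M] (s : ℕ → D → M)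

noncomputable def netApprox : ℕ → (ℕ → D) → M
  | 0, x => s 0 (x 0)
  | n + 1, x =>
    if dist (netApprox n x) (s (n + 1) (x (n + 1))) ≤ 2 / 2 ^ n then s (n + 1) (x (n + 1))
    else netApprox n x

theorem dist_netApprox_succ_le (n : ℕ) (x : ℕ → D) :
    dist (netApprox s n x) (netApprox s (n + 1) x) ≤ 2 / 2 ^ n := by
  rw [netApprox]
  split_ifs with h
  · exact h
  · rw [dist_self]; positivity

theorem netApprox_succ_of_dist_lt {n : ℕ} {x : ℕ → D} {m : M}
    (h : dist m (netApprox s n x) < 1 / 2 ^ n)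
    (h' : dist m (s (n + 1) (x (n + 1))) < 1 / 2 ^ (n + 1)) :
    netApprox s (n + 1) x = s (n + 1) (x (n + 1)) := by
  refine if_pos ?_
  calc dist (netApprox s n x) (s (n + 1) (x (n + 1)))
      ≤ dist m (netApprox s n x) + dist m (s (n + 1) (x (n + 1))) := dist_triangle_left _ _ _
    _ ≤ 1 / 2 ^ n + 1 / 2 ^ (n + 1) := add_le_add h.le h'.le
    _ ≤ 2 / 2 ^ n := by rw [pow_succ]; field_simp; norm_num

theorem netApprox_eq_of_mem_cylinder {n : ℕ} {x z : ℕ → D} (hz : z ∈ cylinder x (n + 1)) :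
    netApprox s n z = netApprox s n x := by
  induction n with
  | zero => exact congrArg (s 0) (hz 0 Nat.one_pos)
  | succ n ih =>
    simp only [netApprox, ih (cylinder_anti x (n + 1).le_succ hz), hz (n + 1) (Nat.lt_succ_self _)]

theorem isLocallyConstant_netApprox [TopologicalSpace D] (hs : ∀ n, IsLocallyConstant (s n))
    (n : ℕ) : IsLocallyConstant (netApprox s n) := by
  induction n with
  | zero => exact (hs 0).comp_continuous (continuous_apply 0)
  | succ n ih =>
    exact ih.comp₂ ((hs (n + 1)).comp_continuous (continuous_apply (n + 1)))
      fun a b => if dist a b ≤ 2 / 2 ^ n then b else a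

theorem cauchySeq_netApprox (x : ℕ → D) : CauchySeq (netApprox s · x) :=
  cauchySeq_of_le_geometric_two (C := 4) fun n =>
    (dist_netApprox_succ_le s n x).trans_eq (by ring)

variable [Nonempty M]

noncomputable def netLimit (x : ℕ → D) : M :=
  limUnder (atTop : Filter ℕ) (netApprox s · x)

variable [CompleteSpace M]

theorem tendsto_netApprox (x : ℕ → D) :
    Tendsto (netApprox s · x) atTop (𝓝 (netLimit s x)) :=
  (cauchySeq_netApprox s x).tendsto_limUnder

theorem dist_netApprox_netLimit_le (n : ℕ) (x : ℕ → D) :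
    dist (netApprox s n x) (netLimit s x) ≤ 4 / 2 ^ n :=
  dist_le_of_le_geometric_two_of_tendsto (fun n =>
    (dist_netApprox_succ_le s n x).trans_eq (by ring)) (tendsto_netApprox s x) n

theorem continuous_netLimit [TopologicalSpace D] (hs : ∀ n, IsLocallyConstant (s n)) :
    Continuous (netLimit s) := by
  refine TendstoUniformly.continuous (F := netApprox s) (p := atTop) ?_
    (Frequently.of_forall fun n => (isLocallyConstant_netApprox s hs n).continuous)
  refine Metric.tendstoUniformly_iff.2 fun ε hε => ?_
  filter_upwards [(tendsto_const_div_two_pow 4).eventually (gt_mem_nhds hε)] with n hn x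
  rw [dist_comm]
  exact (dist_netApprox_netLimit_le s n x).trans_lt hn

variable {s}

theorem ball_netApprox_subset_image_cylinder (hnet : ∀ n m, ∃ y, dist m (s n y) < 1 / 2 ^ n)
    (n : ℕ) (x : ℕ → D) :
    ball (netApprox s n x) (1 / 2 ^ n) ⊆ netLimit s '' cylinder x (n + 1) := by
  intro m hm
  choose y hy using fun j => hnet j m
  set z : ℕ → D := fun j => if j ≤ n then x j else y j
  have hzx : z ∈ cylinder x (n + 1) := fun j hj => if_pos (Nat.le_of_lt_succ hj)
  have hclose : ∀ k, dist m (netApprox s (k + n) z) < 1 / 2 ^ (k + n) := by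
    intro k
    induction k with
    | zero => simpa [netApprox_eq_of_mem_cylinder s hzx] using hm
    | succ k ih =>
      have hz : z (k + n + 1) = y (k + n + 1) := if_neg (by omega)
      rw [Nat.add_right_comm, netApprox_succ_of_dist_lt s ih (hz ▸ hy _), hz]
      exact hy _
  have hlim : Tendsto (fun k => netApprox s (k + n) z) atTop (𝓝 m) :=
    tendsto_iff_dist_tendsto_zero.2 <| squeeze_zero (fun _ => dist_nonneg)
      (fun k => (dist_comm m _ ▸ hclose k).le)
      ((tendsto_const_div_two_pow 1).comp (tendsto_add_atTop_nat n))
  exact ⟨z, hzx, tendsto_nhds_unique ((tendsto_netApprox s z).comp (tendsto_add_atTop_nat n)) hlim⟩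

theorem netLimit_surjective (hnet : ∀ n m, ∃ y, dist m (s n y) < 1 / 2 ^ n) :
    Function.Surjective (netLimit s) := fun m => by
  obtain ⟨y, hy⟩ := hnet 0 m
  obtain ⟨z, -, hz⟩ := ball_netApprox_subset_image_cylinder hnet 0 (fun _ => y) hy
  exact ⟨z, hz⟩

theorem interior_netLimit_image_nonempty [TopologicalSpace D]
    (hnet : ∀ n m, ∃ y, dist m (s n y) < 1 / 2 ^ n) {V : Set (ℕ → D)} (hV : IsOpen V)
    (hVne : V.Nonempty) : (interior (netLimit s '' V)).Nonempty := by
  obtain ⟨x, hx⟩ := hVne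
  obtain ⟨n, hn⟩ := exists_cylinder_subset_of_mem_nhds (hV.mem_nhds hx)
  have hsub : ball (netApprox s n x) (1 / 2 ^ n) ⊆ netLimit s '' V :=
    (ball_netApprox_subset_image_cylinder hnet n x).trans
      (image_mono ((cylinder_anti x n.le_succ).trans hn))
  exact ⟨_, isOpen_ball.subset_interior_iff.2 hsub (mem_ball_self (by positivity))⟩

end NetLimit

/-- For every Cantor space `K` (a space homeomorphic to `{0,1}^ℕ`) and every nonempty
compact metric space `M` there is a continuous surjection `f : K → M` such that
preimages of meager sets are meager. -/
theorem exists_continuous_surjection_meager_preimage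
    {K : Type*} [TopologicalSpace K] (hK : Nonempty (K ≃ₜ (ℕ → Bool)))
    {M : Type*} [MetricSpace M] [CompactSpace M] [Nonempty M] :
    ∃ f : K → M, Continuous f ∧ Function.Surjective f ∧
      ∀ A : Set M, IsMeagre A → IsMeagre (f ⁻¹' A) := by
  choose s hs hnet using fun n : ℕ =>
    exists_isLocallyConstant_forall_exists_dist_lt (M := M) (ε := 1 / 2 ^ n) (by positivity)
  let φ : K ≃ₜ (ℕ → ℕ → Bool) := hK.some.trans cantorSpaceHomeomorphNatToCantorSpace
  have hf : Continuous (netLimit s) := continuous_netLimit s hs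
  have hres : Tendsto (netLimit s) (residual _) (residual M) :=
    tendsto_residual_of_interior_image_nonempty hf fun _ => interior_netLimit_image_nonempty hnet
  exact ⟨netLimit s ∘ φ, hf.comp φ.continuous, (netLimit_surjective hnet).comp φ.surjective,
    fun A hA => hres.comp (tendsto_residual_of_isOpenMap φ.continuous φ.isOpenMap) hA⟩
end

section
/- Let K be a Cantor space, M a compact metric space, and f : K → M a continuous surjection such that the image of every nonempty open subset of K has nonempty interior in M. Then for every meager A ⊆ M, the set f⁻¹(A) is meager in K. -/
/-!
A map `f` sending nonempty open sets to sets with nonempty interior pulls dense sets back to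
dense sets; if `f` is also continuous, it pulls dense open sets back to dense open sets. Since
the residual filter is generated by dense open sets, preimages of residual sets are then
residual, which is the statement for their complements, the meagre sets.
-/

open Set Filter Topology

def IsSomewhatOpenMap {X Y : Type*} [TopologicalSpace X] [TopologicalSpace Y] (f : X → Y) :
    Prop :=
  ∀ U : Set X, IsOpen U → U.Nonempty → (interior (f '' U)).Nonempty

section SomewhatOpen

variable {X Y : Type*} [TopologicalSpace X] [TopologicalSpace Y] {f : X → Y}

theorem Dense.preimage_of_isSomewhatOpenMap (hf : IsSomewhatOpenMap f) {t : Set Y}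
    (ht : Dense t) : Dense (f ⁻¹' t) := by
  refine dense_iff_inter_open.mpr fun U hU hne => ?_
  obtain ⟨_, ⟨x, hxU, rfl⟩, hxt⟩ :=
    (dense_iff_inter_open.mp ht _ isOpen_interior (hf U hU hne)).mono
      (inter_subset_inter_left t interior_subset)
  exact ⟨x, hxU, hxt⟩

theorem tendsto_residual_of_isSomewhatOpenMap (hc : Continuous f) (hf : IsSomewhatOpenMap f) :
    Tendsto f (residual X) (residual Y) := by
  apply le_countableGenerate_iff_of_countableInterFilter.mpr
  rintro t ⟨ht, htd⟩
  exact residual_of_dense_open (ht.preimage hc) (htd.preimage_of_isSomewhatOpenMap hf)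

theorem IsMeagre.preimage_of_isSomewhatOpenMap (hc : Continuous f) (hf : IsSomewhatOpenMap f)
    {s : Set Y} (hs : IsMeagre s) : IsMeagre (f ⁻¹' s) :=
  tendsto_residual_of_isSomewhatOpenMap hc hf hs

end SomewhatOpen

theorem meager_preimage_of_open_image_general
    {K : Type*} [TopologicalSpace K]
    {M : Type*} [MetricSpace M]
    (f : K → M) (hf : Continuous f)
    (hopen : ∀ U : Set K, IsOpen U → U.Nonempty → (interior (f '' U)).Nonempty)
    (A : Set M) (hA : IsMeagre A) : IsMeagre (f ⁻¹' A) :=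
  hA.preimage_of_isSomewhatOpenMap hf hopen

/-- If `K` is a Cantor space, `M` a compact metric space and `f : K → M` a continuous
surjection mapping nonempty open sets to sets with nonempty interior, then preimages
under `f` of meager sets are meager. -/
theorem meager_preimage_of_open_image
    {K : Type*} [TopologicalSpace K] (hK : Nonempty (K ≃ₜ (ℕ → Bool)))
    {M : Type*} [MetricSpace M] [CompactSpace M]
    (f : K → M) (hf : Continuous f) (hsurj : Function.Surjective f)
    (hopen : ∀ U : Set K, IsOpen U → U.Nonempty → (interior (f '' U)).Nonempty)
    (A : Set M) (hA : IsMeagre A) : IsMeagre (f ⁻¹' A) :=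
  meager_preimage_of_open_image_general f hf hopen A hA
end

section
/- Let X be an abelian Polish group and A ⊆ X. Then A is Haar meager if and only if there exist a compact set K ⊆ X and a continuous function g : K → X and a Borel set B ⊇ A such that g⁻¹(B + x) is meager in K for all x ∈ X. -/
/-! A continuous surjection `q : L → K` from a compact space is *irreducible* if no proper closed
subset of `L` maps onto `K`. The image of a nonempty open set `U` under an irreducible map
contains the nonempty open set `(q '' Uᶜ)ᶜ`, so `q` pulls nowhere dense sets back to nowhere dense
sets and meagre sets to meagre sets. By the Hausdorff–Alexandroff theorem and Zorn's lemma every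
nonempty compact metric space is an irreducible image of a compact subset of the Cantor space,
and the Cantor space embeds into every uncountable Polish space; precomposing the witness `f`
with such a map gives a witness defined on a compact subset of `X`. If `X` is countable, the
Baire category theorem forces `B = ∅`. Conversely, a compact subset of `X` is homeomorphic to a
compact subset of the Hilbert cube, which is a compact metric space in `Type`. -/

open Set

open Function Filter Topology

section IrreducibleSurjection

variable {E A : Type*} [TopologicalSpace E] [TopologicalSpace A] [CompactSpace E] [T2Space A]
  {q : E → A}

theorem interior_preimage_eq_empty_of_irreducible (hq : Continuous q) (hsurj : Surjective q)
    (hirr : ∀ s : Set E, s ≠ univ → IsClosed s → q '' s ≠ univ) {F : Set A}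
    (hF : interior F = ∅) : interior (q ⁻¹' F) = ∅ := by
  set G := interior (q ⁻¹' F)
  have hW : (q '' Gᶜ)ᶜ ⊆ F := by
    intro a ha
    obtain ⟨e, rfl⟩ := hsurj a
    have he : e ∈ G := by_contra fun he ↦ ha ⟨e, he, rfl⟩
    exact (interior_subset he : e ∈ q ⁻¹' F)
  have hWopen : IsOpen (q '' Gᶜ)ᶜ :=
    ((isOpen_interior.isClosed_compl.isCompact.image hq).isClosed).isOpen_compl
  have hcover : q '' Gᶜ = univ := by
    simpa [hF] using hWopen.subset_interior_iff.2 hW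
  by_contra hG
  exact hirr Gᶜ (compl_ne_univ.2 (nonempty_iff_ne_empty.2 hG)) isOpen_interior.isClosed_compl
    hcover

theorem tendsto_residual_of_irreducible (hq : Continuous q) (hsurj : Surjective q)
    (hirr : ∀ s : Set E, s ≠ univ → IsClosed s → q '' s ≠ univ) :
    Tendsto q (residual E) (residual A) := by
  refine le_countableGenerate_iff_of_countableInterFilter.2 ?_
  rintro t ⟨ht, htd⟩
  refine residual_of_dense_open (ht.preimage hq) ?_
  have hint : interior tᶜ = ∅ := interior_eq_empty_iff_dense_compl.2 (by rwa [compl_compl])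
  simpa only [preimage_compl, compl_compl] using interior_eq_empty_iff_dense_compl.1
    (interior_preimage_eq_empty_of_irreducible hq hsurj hirr hint)

end IrreducibleSurjection

theorem exists_compact_nat_bool_tendsto_residual (K : Type) [MetricSpace K] [CompactSpace K]
    [Nonempty K] : ∃ L : Set (ℕ → Bool), CompactSpace L ∧ Nonempty L ∧
      ∃ q : L → K, Continuous q ∧ Tendsto q (residual L) (residual K) := by
  obtain ⟨φ, hφ, hφsurj⟩ := exists_nat_bool_continuous_surjective_of_compact K
  obtain ⟨L, hL, hLsurj, hLirr⟩ := exists_compact_surjective_zorn_subset hφ hφsurj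
  have hqsurj : Surjective (L.domRestrict φ) := by
    intro k
    obtain ⟨e, he, rfl⟩ := hLsurj.symm ▸ mem_univ k
    exact ⟨⟨e, he⟩, rfl⟩
  have hq : Continuous (L.domRestrict φ) := hφ.comp continuous_subtype_val
  exact ⟨L, hL, hqsurj.nonempty, _, hq, tendsto_residual_of_irreducible hq hqsurj hLirr⟩

theorem exists_isCompact_tendsto_residual_of_not_countable {X : Type*} [TopologicalSpace X]
    [PolishSpace X] (hX : ¬Countable X) (K : Type) [MetricSpace K] [CompactSpace K]
    [Nonempty K] : ∃ C : Set X, IsCompact C ∧ C.Nonempty ∧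
      ∃ q : C → K, Continuous q ∧ Tendsto q (residual C) (residual K) := by
  obtain ⟨j, -, hj, hjinj⟩ :=
    isClosed_univ.exists_nat_bool_injection_of_not_countable (countable_univ_iff.not.2 hX)
  obtain ⟨L, _, _, q, hq, hqres⟩ := exists_compact_nat_bool_tendsto_residual K
  have hjL : IsClosedEmbedding (L.domRestrict j) :=
    (hj.comp continuous_subtype_val).isClosedEmbedding (hjinj.comp Subtype.val_injective)
  let e : L ≃ₜ range (L.domRestrict j) := hjL.toHomeomorph
  exact ⟨_, isCompact_range hjL.continuous, range_nonempty _, q ∘ e.symm,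
    hq.comp e.symm.continuous,
    hqres.comp (tendsto_residual_of_isOpenMap e.symm.continuous e.symm.isOpenMap)⟩

theorem exists_homeomorph_compact_metricSpace (K : Type*) [TopologicalSpace K] [CompactSpace K]
    [TopologicalSpace.MetrizableSpace K] :
    ∃ (L : Type) (_ : MetricSpace L), CompactSpace L ∧ Nonempty (K ≃ₜ L) := by
  let := TopologicalSpace.metrizableSpaceMetric K
  obtain ⟨F, hF⟩ := Metric.PiNatEmbed.exists_embedding_to_hilbert_cube (X := K)
  let e : K ≃ₜ range F := hF.toHomeomorph
  let : MetricSpace (range F) := e.symm.isEmbedding.comapMetricSpace e.symm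
  exact ⟨range F, inferInstance, isCompact_iff_compactSpace.1 (isCompact_range hF.continuous), ⟨e⟩⟩

theorem eq_empty_of_isMeagre_preimage_translates {X K : Type*} [AddCommGroup X] [Countable X]
    [TopologicalSpace K] [BaireSpace K] [Nonempty K] {f : K → X} {B : Set X}
    (h : ∀ x, IsMeagre (f ⁻¹' {y | y - x ∈ B})) : B = ∅ := by
  refine eq_empty_of_forall_notMem fun b hb ↦ ?_
  have hcover : (⋃ x, f ⁻¹' {y | y - x ∈ B}) = univ :=
    eq_univ_of_forall fun k ↦ mem_iUnion.2 ⟨f k - b, by simpa using hb⟩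
  exact not_isMeagre_of_isOpen isOpen_univ univ_nonempty (hcover ▸ isMeagre_iUnion h)

theorem isHaarMeager_iff_compact_subset_general {X : Type*} [AddCommGroup X]
    [TopologicalSpace X] [PolishSpace X]
    [MeasurableSpace X] (A : Set X) :
    IsHaarMeager A ↔
      ∃ (K : Set X), IsCompact K ∧ K.Nonempty ∧
        ∃ g : K → X, Continuous g ∧
          ∃ B : Set X, A ⊆ B ∧ MeasurableSet B ∧
            ∀ x : X, IsMeagre (g ⁻¹' {y | y - x ∈ B}) := by
  constructor
  · rintro ⟨B, hAB, hB, K, _, _, _, f, hf, hmeagre⟩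
    by_cases hX : Countable X
    · obtain rfl := eq_empty_of_isMeagre_preimage_translates hmeagre
      refine ⟨{0}, isCompact_singleton, singleton_nonempty 0, fun _ ↦ 0, continuous_const,
        ∅, hAB, MeasurableSet.empty, fun x ↦ ?_⟩
      simpa using IsMeagre.empty
    obtain ⟨C, hC, hCne, q, hq, hqres⟩ :=
      exists_isCompact_tendsto_residual_of_not_countable hX K
    exact ⟨C, hC, hCne, f ∘ q, hf.comp hq, B, hAB, hB, fun x ↦ hqres (hmeagre x)⟩
  · rintro ⟨K, hK, hKne, g, hg, B, hAB, hB, hmeagre⟩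
    have : CompactSpace K := isCompact_iff_compactSpace.1 hK
    obtain ⟨L, _, _, ⟨e⟩⟩ := exists_homeomorph_compact_metricSpace K
    have : Nonempty K := hKne.to_subtype
    exact ⟨B, hAB, hB, L, inferInstance, inferInstance, e.symm.nonempty, g ∘ e.symm,
      hg.comp e.symm.continuous, fun x ↦ (hmeagre x).preimage_of_isOpenMap e.symm.continuous
        e.symm.isOpenMap⟩

/-- A set in an abelian Polish group is Haar meager iff the witness compact space can
be taken to be a compact subset of the group itself. -/
theorem isHaarMeager_iff_compact_subset {X : Type*} [AddCommGroup X]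
    [TopologicalSpace X] [IsTopologicalAddGroup X] [PolishSpace X]
    [MeasurableSpace X] [BorelSpace X] (A : Set X) :
    IsHaarMeager A ↔
      ∃ (K : Set X), IsCompact K ∧ K.Nonempty ∧
        ∃ g : K → X, Continuous g ∧
          ∃ B : Set X, A ⊆ B ∧ MeasurableSet B ∧
            ∀ x : X, IsMeagre (g ⁻¹' {y | y - x ∈ B}) :=
  isHaarMeager_iff_compact_subset_general A
end

section
/- If X is a countable abelian Polish group, then the only Haar meager subset of X is the empty set. -/
/-!
If `a ∈ A ⊆ B`, every `y ∈ X` lies in the translate `B + (y - a)`, so the countably many sets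
`f ⁻¹' (B + x)` cover `K`. They cannot all be meagre, since `K`, being a nonempty compact metric
space, is a Baire space.
-/

open Set

theorem iUnion_setOf_sub_mem_eq_univ {X : Type*} [AddGroup X] {B : Set X} (hB : B.Nonempty) :
    ⋃ x : X, {y | y - x ∈ B} = univ := by
  obtain ⟨a, ha⟩ := hB
  refine eq_univ_of_forall fun y => mem_iUnion.2 ⟨-a + y, ?_⟩
  simpa [sub_eq_add_neg] using ha

theorem exists_not_isMeagre_preimage_setOf_sub_mem {K X : Type*} [TopologicalSpace K]
    [BaireSpace K] [Nonempty K] [AddGroup X] [Countable X] (f : K → X) {B : Set X}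
    (hB : B.Nonempty) : ∃ x : X, ¬IsMeagre (f ⁻¹' {y | y - x ∈ B}) := by
  by_contra! h
  have hK : IsMeagre (univ : Set K) := by
    rw [← preimage_univ (f := f), ← iUnion_setOf_sub_mem_eq_univ hB, preimage_iUnion]
    exact isMeagre_iUnion h
  exact not_isMeagre_of_isOpen isOpen_univ univ_nonempty hK

theorem isHaarMeager_eq_empty_of_countable_general {X : Type*} [AddCommGroup X]
    [TopologicalSpace X] [Countable X]
    [MeasurableSpace X]
    (A : Set X) (hA : IsHaarMeager A) : A = ∅ := by
  refine eq_empty_of_forall_notMem fun a ha => ?_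
  obtain ⟨B, hAB, -, K, _, _, _, f, -, hf⟩ := hA
  obtain ⟨x, hx⟩ := exists_not_isMeagre_preimage_setOf_sub_mem f ⟨a, hAB ha⟩
  exact hx (hf x)

/-- In a countable abelian Polish group the only Haar meager set is the empty set. -/
theorem isHaarMeager_eq_empty_of_countable {X : Type*} [AddCommGroup X]
    [TopologicalSpace X] [IsTopologicalAddGroup X] [PolishSpace X] [Countable X]
    [MeasurableSpace X] [BorelSpace X]
    (A : Set X) (hA : IsHaarMeager A) : A = ∅ :=
  isHaarMeager_eq_empty_of_countable_general A hA
end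

section
/- Let X be a Polish group that is not locally compact. Then X contains a closed nowhere dense set which is not Haar meager; in fact there is a closed set F ⊆ X such that F contains a translate of every compact subset of X and F is nowhere dense. -/
/-!
Fix a symmetric open basis `W n` at `0` with `W (n + 1) + W (n + 1) ⊆ W n`. An abelian Polish
group is complete for its group uniformity, being a dense Gδ subgroup of its completion. Hence,
if `X` is not locally compact, no `W i` is totally bounded: there are scales `a n ≤ b n` with
`W (a n)` not covered by finitely many translates of `W (b n)`. Let `U` be the union of the
neighbourhoods `x n + W (b n + 2)` of a dense sequence; `F = Uᶜ` is closed and nowhere dense.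
For a compact `C`, this non-coverability lets us choose `y n ∈ W (a n)` one at a time so that
`C + y 0 + ⋯ + y n`, even after a further move by `W (b n + 2)`, misses `x n + W (b n + 2)`;
the series `∑ y n` converges by completeness, and its sum `t` satisfies `C + t ⊆ F`. Finally a
set containing a translate of every compact set is not Haar meager: the image of a compact
probe `f : K → X` lies in a translate of it, whose preimage is all of `K`, not meager.
-/

open Set

open Filter Topology Pointwise Uniformity

theorem Topology.IsEmbedding.isGδ_range {X Y : Type*} [TopologicalSpace X]
    [TopologicalSpace.IsCompletelyMetrizableSpace X] [MetricSpace Y] {f : X → Y}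
    (hf : IsEmbedding f) : IsGδ (range f) := by
  let := TopologicalSpace.upgradeIsCompletelyMetrizable X
  -- `S n` is where the inverse of `f` oscillates by less than `1 / (n + 1)`
  set S : ℕ → Set Y := fun n => ⋃₀ {O | IsOpen O ∧
    ∀ a ∈ f ⁻¹' O, ∀ b ∈ f ⁻¹' O, dist a b < 1 / (n + 1)}
  suffices range f = closure (range f) ∩ ⋂ n, S n by
    rw [this]
    exact isClosed_closure.isGδ.inter <| .iInter fun n => (isOpen_sUnion fun O hO => hO.1).isGδ
  refine Subset.antisymm (subset_inter subset_closure ?_) ?_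
  · rintro _ ⟨x, rfl⟩
    refine mem_iInter.2 fun n => ?_
    obtain ⟨O, hO, hfO⟩ := hf.isInducing.isOpen_iff.1
      (Metric.isOpen_ball (x := x) (ε := 1 / (2 * (n + 1))))
    refine ⟨O, ⟨hO, fun a ha b hb => ?_⟩, ?_⟩
    · rw [hfO, Metric.mem_ball] at ha hb
      calc dist a b ≤ dist a x + dist b x := dist_triangle_right a b x
        _ < 1 / (2 * (n + 1)) + 1 / (2 * (n + 1)) := add_lt_add ha hb
        _ = 1 / (n + 1) := by field_simp; ring
    · rw [← mem_preimage, hfO]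
      exact Metric.mem_ball_self (by positivity)
  · rintro y ⟨hy, hyS⟩
    simp only [S, mem_iInter, mem_sUnion] at hyS
    choose O hO hyO using hyS
    set P : ℕ → Set Y := fun n => (⋂ k ∈ Iic n, O k) ∩ Metric.ball y (1 / (n + 1))
    have hP : ∀ n, IsOpen (P n) ∧ y ∈ P n := fun n =>
      ⟨((finite_Iic n).isOpen_biInter fun k _ => (hO k).1).inter Metric.isOpen_ball,
        mem_biInter fun k _ => hyO k, Metric.mem_ball_self (by positivity)⟩
    have : ∀ n, ∃ x, f x ∈ P n := fun n => by
      obtain ⟨_, hz, x, rfl⟩ := mem_closure_iff.1 hy _ (hP n).1 (hP n).2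
      exact ⟨x, hz⟩
    choose x hx using this
    have hxO : ∀ {k n}, k ≤ n → x n ∈ f ⁻¹' O k := fun hkn =>
      mem_iInter₂.1 (hx _).1 _ hkn
    have hcauchy : CauchySeq x := Metric.cauchySeq_iff'.2 fun ε hε => by
      obtain ⟨N, hN⟩ := exists_nat_one_div_lt hε
      exact ⟨N, fun n hn => ((hO N).2 _ (hxO hn) _ (hxO le_rfl)).trans hN⟩
    obtain ⟨l, hl⟩ := cauchySeq_tendsto_of_complete hcauchy
    have hfx : Tendsto (f ∘ x) atTop (𝓝 y) :=
      tendsto_iff_dist_tendsto_zero.2 <| squeeze_zero (fun n => dist_nonneg)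
        (fun n => (Metric.mem_ball.1 (hx n).2).le) tendsto_one_div_add_atTop_nhds_zero_nat
    exact ⟨l, tendsto_nhds_unique ((hf.continuous.tendsto l).comp hl) hfx⟩

theorem IsUniformAddGroup.completeSpace_of_polishSpace {G : Type*} [AddCommGroup G]
    [MetricSpace G] [IsUniformAddGroup G] [PolishSpace G] : CompleteSpace G := by
  open UniformSpace.Completion in
  have hGδ := (isUniformEmbedding_coe G).isEmbedding.isGδ_range
  -- each translate of the dense Gδ set `G` meets `G` itself, by Baire's theorem
  suffices ∀ z : UniformSpace.Completion G, z ∈ range ((↑) : G → _) from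
    (completeSpace_iff_isComplete_range (isUniformEmbedding_coe G).isUniformInducing).2 <|
      by simpa [eq_univ_of_forall this] using isComplete_univ
  intro z
  obtain ⟨_, ⟨b, hb⟩, a, rfl⟩ := (Dense.inter_of_Gδ (hGδ.preimage (continuous_const_add z)) hGδ
    (denseRange_coe.preimage (Homeomorph.addLeft z).isOpenMap) denseRange_coe).nonempty
  exact ⟨b - a, by rw [coe_sub, hb, add_sub_cancel_right]⟩

section HalvingBasis

variable {G : Type*} [AddGroup G] [TopologicalSpace G]

structure IsSymmHalvingBasis (W : ℕ → Set G) : Prop where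
  hasAntitoneBasis : (𝓝 (0 : G)).HasAntitoneBasis W
  isOpen : ∀ n, IsOpen (W n)
  neg_eq : ∀ n, -W n = W n
  add_subset : ∀ n, W (n + 1) + W (n + 1) ⊆ W n

variable (G) in
theorem exists_isSymmHalvingBasis [IsTopologicalAddGroup G] [FirstCountableTopology G] :
    ∃ W : ℕ → Set G, IsSymmHalvingBasis W := by
  obtain ⟨u, hu, hu_add⟩ := IsTopologicalAddGroup.exists_antitone_basis_nhds_zero G
  refine ⟨fun n => interior (u n ∩ -u n), ⟨⟨?_, ?_⟩, fun n => isOpen_interior, fun n => ?_,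
    fun n => ?_⟩⟩
  · refine hu.1.to_hasBasis' (fun n _ => ⟨n, trivial, interior_subset.trans inter_subset_left⟩)
      fun n _ => interior_mem_nhds.2 (inter_mem (hu.mem n) (neg_mem_nhds_zero G (hu.mem n)))
  · exact fun m n hmn =>
      interior_mono (inter_subset_inter (hu.2 hmn) (neg_subset_neg.2 (hu.2 hmn)))
  · have hsymm : -(u n ∩ -u n) = u n ∩ -u n := by rw [Set.inter_neg, neg_neg, inter_comm]
    nth_rw 2 [← hsymm]
    exact (Homeomorph.neg G).preimage_interior _
  · refine interior_maximal ((add_subset_add interior_subset interior_subset).trans ?_)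
      isOpen_interior.add_left
    rintro _ ⟨a, ⟨ha, ha'⟩, b, ⟨hb, hb'⟩, rfl⟩
    refine ⟨hu_add n (add_mem_add ha hb), ?_⟩
    rw [Set.mem_neg, neg_add_rev]
    exact hu_add n (add_mem_add hb' ha')

namespace IsSymmHalvingBasis

variable {W : ℕ → Set G}

theorem mem_nhds (hW : IsSymmHalvingBasis W) (n : ℕ) : W n ∈ 𝓝 (0 : G) :=
  hW.hasAntitoneBasis.mem n

theorem zero_mem (hW : IsSymmHalvingBasis W) (n : ℕ) : (0 : G) ∈ W n :=
  mem_of_mem_nhds (hW.mem_nhds n)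

theorem sub_subset (hW : IsSymmHalvingBasis W) (n : ℕ) : W (n + 1) - W (n + 1) ⊆ W n := by
  rw [sub_eq_add_neg, hW.neg_eq]
  exact hW.add_subset n

theorem sub_sub_subset (hW : IsSymmHalvingBasis W) (n : ℕ) :
    W (n + 2) - W (n + 2) - W (n + 2) ⊆ W n :=
  (sub_subset_sub (hW.sub_subset (n + 1)) (hW.hasAntitoneBasis.antitone (Nat.le_succ _))).trans
    (hW.sub_subset n)

theorem closure_subset [IsTopologicalAddGroup G] (hW : IsSymmHalvingBasis W) (n : ℕ) :
    closure (W (n + 1)) ⊆ W n := fun z hz => by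
  obtain ⟨y, hy, hyz⟩ := mem_closure_iff_nhds_zero.1 hz _ (hW.mem_nhds (n + 1))
  have hzy : z - y ∈ W (n + 1) := by
    rw [← hW.neg_eq, ← neg_sub]
    exact Set.neg_mem_neg.2 hyz
  simpa only [sub_add_cancel] using hW.add_subset n (add_mem_add hzy hy)

theorem sub_mem_of_forall_succ_sub_mem (hW : IsSymmHalvingBasis W) {N : ℕ} {t : ℕ → G}
    (ht : ∀ k, t (k + 1) - t k ∈ W (N + k + 1)) (n : ℕ) : t n - t 0 ∈ W N := by
  induction n generalizing N t with
  | zero => simpa using hW.zero_mem N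
  | succ n ih =>
    have htail : t (n + 1) - t 1 ∈ W (N + 1) :=
      ih (t := fun k => t (k + 1)) fun k => by convert ht (k + 1) using 2; omega
    rw [← sub_add_sub_cancel _ (t 1)]
    exact hW.add_subset N (add_mem_add htail (ht 0))

theorem sub_mem_of_tendsto [IsTopologicalAddGroup G] (hW : IsSymmHalvingBasis W) {N : ℕ}
    {t : ℕ → G} {z : G} (hz : Tendsto t atTop (𝓝 z))
    (ht : ∀ k, t (k + 1) - t k ∈ W (N + k + 2)) : z - t 0 ∈ W N :=
  hW.closure_subset N <| mem_closure_of_tendsto (hz.sub_const (t 0)) <| .of_forall <|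
    hW.sub_mem_of_forall_succ_sub_mem fun k => by convert ht k using 2; omega

end IsSymmHalvingBasis

end HalvingBasis

section RightUniformity

attribute [local instance] IsTopologicalAddGroup.rightUniformSpace
  isUniformAddGroup_of_addCommGroup

variable {G : Type*} [AddCommGroup G] [TopologicalSpace G] [IsTopologicalAddGroup G]
  [PolishSpace G]

theorem completeSpace_rightUniformSpace : CompleteSpace G := by
  have : (𝓤 G).IsCountablyGenerated := IsUniformAddGroup.uniformity_countably_generated
  let := UniformSpace.metricSpace G
  exact IsUniformAddGroup.completeSpace_of_polishSpace

theorem locallyCompactSpace_of_forall_finite_cover {U : Set G} (hU : U ∈ 𝓝 0)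
    (h : ∀ V ∈ 𝓝 (0 : G), ∃ T : Set G, T.Finite ∧ U ⊆ ⋃ y ∈ T, y +ᵥ V) :
    LocallyCompactSpace G :=
  have : CompleteSpace G := completeSpace_rightUniformSpace
  (totallyBounded_iff_subset_finite_iUnion_nhds_zero.2 h).closure.isCompact_of_isClosed
    isClosed_closure |>.locallyCompactSpace_of_mem_nhds_of_addGroup
      (mem_of_superset hU subset_closure)

theorem IsSymmHalvingBasis.exists_tendsto {W : ℕ → Set G} (hW : IsSymmHalvingBasis W)
    {t : ℕ → G} (ht : ∀ k, t (k + 1) - t k ∈ W k) : ∃ z, Tendsto t atTop (𝓝 z) := by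
  have : CompleteSpace G := completeSpace_rightUniformSpace
  refine cauchySeq_tendsto_of_complete <|
    hW.hasAntitoneBasis.1.uniformity_of_nhds_zero.cauchySeq_iff.2 fun i _ =>
      ⟨i + 2, fun m hm n hn => ?_⟩
  have htail : ∀ {p}, i + 2 ≤ p → t p - t (i + 2) ∈ W (i + 1) := fun {p} hp => by
    obtain ⟨k, rfl⟩ := Nat.exists_eq_add_of_le hp
    exact hW.sub_mem_of_forall_succ_sub_mem (t := fun j => t (i + 2 + j))
      (fun j => by rw [show i + 1 + j + 1 = i + 2 + j by omega]; exact ht (i + 2 + j)) k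
  show t n - t m ∈ W i
  simpa only [sub_sub_sub_cancel_right] using hW.sub_subset i (sub_mem_sub (htail hn) (htail hm))

theorem IsSymmHalvingBasis.exists_forall_not_finite_cover {W : ℕ → Set G}
    (hW : IsSymmHalvingBasis W) (hG : ¬ LocallyCompactSpace G) :
    ∃ s : ℕ → ℕ, ∀ i, i ≤ s i ∧ ∀ T : Set G, T.Finite → ¬ W i ⊆ ⋃ y ∈ T, y +ᵥ W (s i) := by
  suffices ∀ i, ∃ j, i ≤ j ∧ ∀ T : Set G, T.Finite → ¬ W i ⊆ ⋃ y ∈ T, y +ᵥ W j by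
    choose s hs using this
    exact ⟨s, hs⟩
  intro i
  by_contra! h
  refine hG (locallyCompactSpace_of_forall_finite_cover (hW.mem_nhds i) fun V hV => ?_)
  obtain ⟨j, -, hj⟩ := hW.hasAntitoneBasis.1.mem_iff.1 hV
  obtain ⟨T, hT, hcov⟩ := h (max i j) (le_max_left i j)
  exact ⟨T, hT, hcov.trans <| iUnion₂_mono fun y _ =>
    vadd_set_mono ((hW.hasAntitoneBasis.antitone (le_max_right i j)).trans hj)⟩

end RightUniformity

section Avoidance

variable {G : Type*} [AddCommGroup G] [TopologicalSpace G] [IsTopologicalAddGroup G]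

theorem IsCompact.exists_mem_forall_add_notMem_vadd {C A B D E : Set G} (hC : IsCompact C)
    (hA : ∀ T : Set G, T.Finite → ¬ A ⊆ ⋃ y ∈ T, y +ᵥ B) (hD : D ∈ 𝓝 0) (hDE : D - D - E ⊆ B)
    (t x : G) : ∃ y ∈ A, ∀ c ∈ C, ∀ e ∈ E, c + (t + y) + e ∉ x +ᵥ D := by
  -- otherwise `A` is covered by the translates `(x - t - c₀) +ᵥ B`, `c₀` in a finite `D`-net of `C`
  obtain ⟨T, -, hCT⟩ := hC.elim_nhds_subcover (fun c => c +ᵥ D) fun c _ => by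
    simpa using vadd_mem_nhds_vadd c hD
  by_contra! h
  refine hA ((fun c => x - t - c) '' T) (T.finite_toSet.image _) fun y hy => ?_
  obtain ⟨c, hc, e, he, d, hd, hcd⟩ := h y hy
  obtain ⟨c₀, hc₀, d', hd', rfl⟩ : ∃ c₀ ∈ T, ∃ d' ∈ D, c₀ + d' = c := by
    simpa [mem_vadd_set] using hCT hc
  refine mem_iUnion₂.2 ⟨_, mem_image_of_mem _ hc₀, d - d' - e,
    hDE (sub_mem_sub (sub_mem_sub hd hd') he), ?_⟩
  simp only [vadd_eq_add] at hcd ⊢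
  rw [show y = x + d - t - c₀ - d' - e by rw [hcd]; abel]
  abel

theorem IsSymmHalvingBasis.exists_forall_add_notMem [PolishSpace G] {W : ℕ → Set G}
    (hW : IsSymmHalvingBasis W) {a b : ℕ → ℕ} (hab : ∀ n, a n ≤ b n)
    (hba : ∀ n, b n + 4 ≤ a (n + 1))
    (hcov : ∀ n, ∀ T : Set G, T.Finite → ¬ W (a n) ⊆ ⋃ y ∈ T, y +ᵥ W (b n))
    (x : ℕ → G) {C : Set G} (hC : IsCompact C) :
    ∃ t, ∀ n, ∀ c ∈ C, c + t ∉ x n +ᵥ W (b n + 2) := by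
  have ha : StrictMono a :=
    strictMono_nat_of_lt_succ fun n => by have := hab n; have := hba n; omega
  choose y hyW hy using fun n t => hC.exists_mem_forall_add_notMem_vadd (hcov n)
    (hW.mem_nhds (b n + 2)) (hW.sub_sub_subset (b n)) t (x n)
  -- the partial sums `τ n` of the series whose sum is the required translate
  let τ : ℕ → G := fun n => Nat.rec 0 (fun k s => s + y k s) n
  have hτ : ∀ n, τ (n + 1) - τ n ∈ W (a n) := fun n => by simpa [τ] using hyW n (τ n)
  obtain ⟨t, ht⟩ := hW.exists_tendsto fun k => hW.hasAntitoneBasis.antitone (ha.id_le k) (hτ k)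
  refine ⟨t, fun n c hc => ?_⟩
  have htail : t - τ (n + 1) ∈ W (b n + 2) :=
    hW.sub_mem_of_tendsto (t := fun k => τ (n + 1 + k))
      (ht.comp <| (tendsto_add_atTop_nat (n + 1)).congr fun k => add_comm k (n + 1))
      fun k => hW.hasAntitoneBasis.antitone (by
        have h₁ := ha.add_le_nat k (n + 1)
        have h₂ := hba n
        rw [add_comm k (n + 1)] at h₁
        omega) (hτ (n + 1 + k))
  have := hy n (τ n) c hc _ htail
  rwa [← show τ (n + 1) = τ n + y n (τ n) from rfl, add_add_sub_cancel] at this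

end Avoidance

theorem not_isHaarMeager_of_forall_isCompact {X : Type*} [AddCommGroup X] [TopologicalSpace X]
    [MeasurableSpace X] {F : Set X}
    (hF : ∀ C : Set X, IsCompact C → ∃ t : X, (fun c => c + t) '' C ⊆ F) : ¬ IsHaarMeager F := by
  rintro ⟨B, hFB, -, K, _, _, _, f, hf, hmeagre⟩
  obtain ⟨t, ht⟩ := hF _ (isCompact_range hf)
  refine not_isMeagre_of_isOpen isOpen_univ univ_nonempty ((hmeagre (-t)).mono fun k _ => ?_)
  show f k - -t ∈ B
  rw [sub_neg_eq_add]
  exact hFB (ht ⟨f k, mem_range_self k, rfl⟩)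

theorem exists_closed_nowhereDense_not_isHaarMeager_general {X : Type*} [AddCommGroup X]
    [TopologicalSpace X] [IsTopologicalAddGroup X] [PolishSpace X]
    [MeasurableSpace X] (hX : ¬ LocallyCompactSpace X) :
    ∃ F : Set X, IsClosed F ∧ IsNowhereDense F ∧
      (∀ C : Set X, IsCompact C → ∃ t : X, (fun c => c + t) '' C ⊆ F) ∧
      ¬ IsHaarMeager F := by
  obtain ⟨W, hW⟩ := exists_isSymmHalvingBasis X
  obtain ⟨s, hs⟩ := hW.exists_forall_not_finite_cover hX
  set a : ℕ → ℕ := fun n => (fun i => s i + 4)^[n] 0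
  set x := TopologicalSpace.denseSeq X
  set U := ⋃ n, x n +ᵥ W (s (a n) + 2)
  have hU : IsOpen U ∧ Dense U :=
    ⟨isOpen_iUnion fun n => (hW.isOpen _).vadd _,
      (TopologicalSpace.denseRange_denseSeq X).mono <| range_subset_iff.2 fun n =>
        mem_iUnion.2 ⟨n, by simpa using vadd_mem_vadd_set (a := x n) (hW.zero_mem _)⟩⟩
  have hF : ∀ C, IsCompact C → ∃ t, (fun c => c + t) '' C ⊆ Uᶜ := fun C hC => by
    obtain ⟨t, ht⟩ := hW.exists_forall_add_notMem (a := a) (b := s ∘ a) (fun n => (hs (a n)).1)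
      (fun n => (Function.iterate_succ_apply' (fun i => s i + 4) n 0).ge)
      (fun n => (hs (a n)).2) x hC
    exact ⟨t, by rintro _ ⟨c, hc, rfl⟩; simpa [U] using fun n => ht n c hc⟩
  obtain ⟨hFc, hFnd⟩ := isClosed_isNowhereDense_iff_compl.2 (by rwa [compl_compl])
  exact ⟨Uᶜ, hFc, hFnd, hF, not_isHaarMeager_of_forall_isCompact hF⟩

/-- A non-locally-compact abelian Polish group contains a closed nowhere dense set that
contains a translate of every compact set, and in particular is not Haar meager. -/
theorem exists_closed_nowhereDense_not_isHaarMeager {X : Type*} [AddCommGroup X]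
    [TopologicalSpace X] [IsTopologicalAddGroup X] [PolishSpace X]
    [MeasurableSpace X] [BorelSpace X] (hX : ¬ LocallyCompactSpace X) :
    ∃ F : Set X, IsClosed F ∧ IsNowhereDense F ∧
      (∀ C : Set X, IsCompact C → ∃ t : X, (fun c => c + t) '' C ⊆ F) ∧
      ¬ IsHaarMeager F :=
  exists_closed_nowhereDense_not_isHaarMeager_general hX
end

section
/- Let X be an abelian Polish group, A ⊆ X a Borel set, K a compact metric space, and f : K → X a continuous function such that f⁻¹(A + x) is meager in K for all x ∈ X. Then for every y ∈ K, the set −f(y) + A is meager in X, hence A is meager. -/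
open Set

/-!
The set `E = {(x, z) ∈ X × K | f z - x ∈ A}` is Borel, and its vertical sections
`f ⁻¹' (A + x)` are meager, so `E` is meager by the Kuratowski–Ulam theorem. Reading
Kuratowski–Ulam in the other direction, for residually many (in particular some) `z ∈ K`
the horizontal section `f z - A` is meager, and `A` is its image under the homeomorphism
`x ↦ f z - x`. Translates of a meager set are meager.
-/

open Topology Filter TopologicalSpace

namespace KuratowskiUlam

variable {α β : Type*} [TopologicalSpace α] [TopologicalSpace β] [SecondCountableTopology β]

theorem eventually_residual_dense_sections {U : Set (α × β)} (hUo : IsOpen U)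
    (hUd : Dense U) : ∀ᶠ x in residual α, Dense (Prod.mk x ⁻¹' U) := by
  have hsection_meets : ∀ V ∈ countableBasis β,
      ∀ᶠ x in residual α, V.Nonempty → (V ∩ Prod.mk x ⁻¹' U).Nonempty := by
    intro V hV
    rcases V.eq_empty_or_nonempty with rfl | hVne
    · exact Eventually.of_forall fun _ h => absurd h not_nonempty_empty
    have hVo : IsOpen V := isOpen_of_mem_countableBasis hV
    -- the first coordinates of points of `U ∩ (univ ×ˢ V)` form an open dense set
    refine mem_of_superset (residual_of_dense_open
      (isOpenMap_fst _ (hUo.inter (isOpen_univ.prod hVo))) ?_) ?_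
    · refine dense_iff_inter_open.2 fun W hWo hWne => ?_
      obtain ⟨p, ⟨hpW, hpV⟩, hpU⟩ :=
        hUd.inter_open_nonempty _ (hWo.prod hVo) (hWne.prod hVne)
      exact ⟨p.1, hpW, p, ⟨hpU, trivial, hpV⟩, rfl⟩
    · rintro _ ⟨⟨x, y⟩, ⟨hU, -, hyV⟩, rfl⟩ -
      exact ⟨y, hyV, hU⟩
  filter_upwards [(eventually_countable_ball (countable_countableBasis β)).2 hsection_meets]
    with x hx
  exact (isBasis_countableBasis β).dense_iff.2 hx

theorem eventually_residual_curry {P : α × β → Prop}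
    (h : ∀ᶠ p in residual (α × β), P p) :
    ∀ᶠ x in residual α, ∀ᶠ y in residual β, P (x, y) := by
  obtain ⟨S, hSo, hSd, hSc, hSP⟩ := mem_residual_iff.1 h
  have hsections : ∀ t ∈ S, ∀ᶠ x in residual α, Prod.mk x ⁻¹' t ∈ residual β :=
    fun t ht => (eventually_residual_dense_sections (hSo t ht) (hSd t ht)).mono fun x hx =>
      residual_of_dense_open ((hSo t ht).preimage (Continuous.prodMk_right x)) hx
  filter_upwards [(eventually_countable_ball hSc).2 hsections] with x hx
  filter_upwards [(countable_bInter_mem hSc).2 hx] with y hy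
  exact hSP (mem_sInter.2 fun t ht => mem_iInter₂.1 hy t ht)

theorem isMeagre_of_forall_isMeagre_sections [BaireSpace α] [BaireSpace β]
    {E : Set (α × β)} (hE : BaireMeasurableSet E)
    (h : ∀ x, IsMeagre (Prod.mk x ⁻¹' E)) : IsMeagre E := by
  obtain ⟨U, hUo, hEU⟩ := hE.residualEq_isOpen
  -- for a box `W ×ˢ V ⊆ U`, some `x ∈ W` has its `U`-section residually equal to its meagre
  -- `E`-section, yet containing the open set `V`
  suffices hU : U = ∅ by
    subst hU
    exact hEU.mono fun p hp hpE => cast hp hpE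
  refine eq_empty_iff_forall_notMem.2 fun ⟨x₀, y₀⟩ hp => ?_
  obtain ⟨W, V, hWo, hVo, hxW, hyV, hWV⟩ := isOpen_prod_iff.1 hUo x₀ y₀ hp
  obtain ⟨x, hxW, hx⟩ := (dense_of_mem_residual
    (eventually_residual_curry hEU)).inter_open_nonempty W hWo ⟨x₀, hxW⟩
  have hUx : IsMeagre (Prod.mk x ⁻¹' U) := by
    filter_upwards [hx, h x] with y hEUy hE hU
    exact hE (cast hEUy.symm hU)
  exact not_isMeagre_of_isOpen hVo ⟨y₀, hyV⟩ (hUx.mono fun y hy => hWV ⟨hxW, hy⟩)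

end KuratowskiUlam

/-- If `A` is Borel in an abelian Polish group `X`, `K` a nonempty compact metric space
and `f : K → X` continuous with `f ⁻¹ (A + x)` meager for all `x`, then `-f y + A` is
meager for every `y ∈ K`, and hence `A` is meager. -/
theorem meager_translate_of_witness {X : Type*} [AddCommGroup X] [TopologicalSpace X]
    [IsTopologicalAddGroup X] [PolishSpace X] [MeasurableSpace X] [BorelSpace X]
    (A : Set X) (hBorel : MeasurableSet A)
    (K : Type*) [MetricSpace K] [CompactSpace K] [Nonempty K]
    (f : K → X) (hf : Continuous f)
    (hw : ∀ x : X, IsMeagre (f ⁻¹' {y | y - x ∈ A})) :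
    (∀ y : K, IsMeagre ((fun a => -f y + a) '' A)) ∧ IsMeagre A := by
  set E : Set (X × K) := {p | f p.2 - p.1 ∈ A}
  have hE : BaireMeasurableSet E := by
    borelize (X × K)
    exact (hBorel.preimage ((hf.comp continuous_snd).sub continuous_fst).measurable
      ).baireMeasurableSet
  have hEmeagre : IsMeagre E := KuratowskiUlam.isMeagre_of_forall_isMeagre_sections hE hw
  have hswap : ∀ᶠ p in residual (K × X), f p.1 - p.2 ∉ A :=
    hEmeagre.preimage_of_isOpenMap continuous_swap (Homeomorph.prodComm K X).isOpenMap
  obtain ⟨z, hz⟩ :=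
    (dense_of_mem_residual (KuratowskiUlam.eventually_residual_curry hswap)).nonempty
  have hA : IsMeagre A := (Homeomorph.subLeft (f z)).image_preimage A ▸
    (Homeomorph.subLeft (f z)).isInducing.isMeagre_image hz
  exact ⟨fun y => (Homeomorph.addLeft (-f y)).isInducing.isMeagre_image hA, hA⟩
end
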